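/- Let J := diag(1, −1) as a 2×2 complex matrix. Let α be a real number with α ≥ 1 and β a complex number with α² − |β|² = 1. Then there exists a 2×2 complex matrix X with Xᴴ J X = J and det X = 1 such that X · Xᴴ = [[α, β], [conj(β), α]]. -/

import Mathlib

open Matrix ComplexConjugate

/-!
The matrices `X = [[a, b], [b̄, a]]` with `a` real are Hermitian, closed under squaring,
`X² = [[a² + |b|², 2ab], [2ab̄, a² + |b|²]]`, and satisfy `X J X = (a² - |b|²) J` and
`det X = a² - |b|²`. So it suffices to solve `a² + |b|² = α`, `2ab = β`, `a² - |b|² = 1`, which the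
half-angle formulas `a = √((α + 1) / 2)`, `b = β / (2a)` do.
-/

def boostMatrix (a : ℝ) (b : ℂ) : Matrix (Fin 2) (Fin 2) ℂ :=
  !![(a : ℂ), b; conj b, (a : ℂ)]

section boostMatrix

variable (a : ℝ) (b : ℂ)

theorem conjTranspose_boostMatrix : (boostMatrix a b)ᴴ = boostMatrix a b := by
  ext i j
  fin_cases i <;> fin_cases j <;> simp [boostMatrix]

theorem det_boostMatrix : (boostMatrix a b).det = ((a ^ 2 - ‖b‖ ^ 2 : ℝ) : ℂ) := by
  rw [boostMatrix, det_fin_two_of, Complex.ofReal_sub, Complex.ofReal_pow, Complex.ofReal_pow,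
    ← Complex.mul_conj']
  ring

theorem boostMatrix_mul_self :
    boostMatrix a b * boostMatrix a b = boostMatrix (a ^ 2 + ‖b‖ ^ 2) (2 * a * b) := by
  rw [boostMatrix, boostMatrix, mul_fin_two]
  ext i j
  fin_cases i <;> fin_cases j <;> simp [← Complex.mul_conj', map_ofNat] <;> ring

theorem boostMatrix_mul_signature_mul_self :
    boostMatrix a b * !![1, 0; 0, -1] * boostMatrix a b
      = ((a ^ 2 - ‖b‖ ^ 2 : ℝ) : ℂ) • !![1, 0; 0, -1] := by
  rw [boostMatrix, mul_fin_two, mul_fin_two]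
  ext i j
  fin_cases i <;> fin_cases j <;> simp [← Complex.mul_conj'] <;> ring

end boostMatrix

theorem exists_half_boost_params {α : ℝ} {β : ℂ} (hα : 1 ≤ α) (h : α ^ 2 - ‖β‖ ^ 2 = 1) :
    ∃ (a : ℝ) (b : ℂ), a ^ 2 - ‖b‖ ^ 2 = 1 ∧ a ^ 2 + ‖b‖ ^ 2 = α ∧ 2 * a * b = β := by
  set a := √((α + 1) / 2)
  have ha : 0 < a := Real.sqrt_pos.mpr (by linarith)
  have ha2 : a ^ 2 = (α + 1) / 2 := Real.sq_sqrt (by linarith)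
  have hb2 : ‖β / (2 * a : ℝ)‖ ^ 2 = (α - 1) / 2 := by
    rw [norm_div, Complex.norm_real, Real.norm_of_nonneg (by positivity), div_pow, mul_pow, ha2]
    field_simp
    nlinarith
  refine ⟨a, β / (2 * a : ℝ), by linarith, by linarith, ?_⟩
  have : (a : ℂ) ≠ 0 := by exact_mod_cast ha.ne'
  push_cast
  field_simp

/-- Every boost `[[α, β], [conj β, α]]` with `α ≥ 1` and `α² − |β|² = 1` arises as
`X · Xᴴ` for some `X ∈ SU(1,1)`. -/
theorem stmt_10 (J : Matrix (Fin 2) (Fin 2) ℂ) (hJ : J = !![1, 0; 0, -1])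
    (α : ℝ) (β : ℂ) (hα : 1 ≤ α) (h : α ^ 2 - ‖β‖ ^ 2 = 1) :
    ∃ X : Matrix (Fin 2) (Fin 2) ℂ, Xᴴ * J * X = J ∧ X.det = 1 ∧
      X * Xᴴ = !![(α : ℂ), β; (starRingEnd ℂ) β, (α : ℂ)] := by
  obtain ⟨a, b, hdet, hdiag, hoff⟩ := exists_half_boost_params hα h
  refine ⟨boostMatrix a b, ?_, ?_, ?_⟩
  · rw [hJ, conjTranspose_boostMatrix, boostMatrix_mul_signature_mul_self, hdet,
      Complex.ofReal_one, one_smul]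
  · rw [det_boostMatrix, hdet, Complex.ofReal_one]
  · rw [conjTranspose_boostMatrix, boostMatrix_mul_self, hdiag, hoff, boostMatrix]
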